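/- arXiv:1503.03526 — 3 statements merged into one kernel-verified Lean document; each statement's English description precedes it below -/
import Mathlib

section
/- Let (V, β, γ) be an Sp(2n,ℝ)-Higgs bundle on a compact Riemann surface Σ of genus g ≥ 2, i.e. V is a rank-n holomorphic bundle, β ∈ H⁰(Sym²(V)⊗K), γ ∈ H⁰(Sym²(V*)⊗K). If deg(V) > n(g-1) then γ = 0 and the associated SL(2n,ℂ)-Higgs bundle (V ⊕ V*, [[0,β],[γ,0]]) has the φ-invariant subbundle V of positive degree, hence is unstable. In particular the Toledo invariant τ = deg(V) of a polystable Sp(2n,ℝ)-Higgs bundle satisfies |τ| ≤ n(g-1). -/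
/-!
If `deg V > n(g-1)` then `Sym²V* ⊗ K`, of degree `(n+1)(n(g-1) - deg V)`, is negative, so `γ = 0`
and `V ⊂ V ⊕ V*` is a `φ`-invariant subbundle of positive degree. Dually, `deg V < -n(g-1)` kills
`β` and makes `V*` a destabilizing subbundle; hence semistability forces `|deg V| ≤ n(g-1)`.
-/

/-- The degree of `Sym²W ⊗ K` for `W` of rank `n` and degree `e`, where `c = g - 1`:
`Sym²W` has rank `n(n+1)/2` and degree `(n+1)e`, and `deg K = 2c`. -/
def symSqTwistDegree (n : ℕ) (e c : ℤ) : ℤ :=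
  ((n : ℤ) + 1) * e + (n : ℤ) * ((n : ℤ) + 1) * c

theorem symSqTwistDegree_neg {n : ℕ} {e c : ℤ} (h : (n : ℤ) * c < -e) :
    symSqTwistDegree n e c < 0 := by
  have hfactor : symSqTwistDegree n e c = ((n : ℤ) + 1) * (e + n * c) := by
    unfold symSqTwistDegree; ring
  rw [hfactor]
  exact mul_neg_of_pos_of_neg (by positivity) (by linarith)

theorem eq_zero_of_symSqTwistDegree_nonneg {M : Type*} [Zero M] {x : M} {n : ℕ} {e c : ℤ}
    (hx : x ≠ 0 → 0 ≤ symSqTwistDegree n e c) (h : (n : ℤ) * c < -e) : x = 0 :=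
  by_contra fun hx0 => (hx hx0).not_gt (symSqTwistDegree_neg h)

/-- the Milnor–Wood/Toledo bound for `Sp(2n,ℝ)`-Higgs bundles
`(V, β, γ)` on a compact Riemann surface of genus `g ≥ 2`, with `d = deg V` the
Toledo invariant.  The section spaces `H⁰(Sym²V ⊗ K)` and `H⁰(Sym²V* ⊗ K)` are
abstract additive groups `SecB`, `SecG`; a nonzero section forces the corresponding
degrees `±(n+1)d + n(n+1)(g-1)` of `Sym²V ⊗ K` resp. `Sym²V* ⊗ K` to be nonnegative.
`Sub` indexes the φ-invariant-candidate subbundles of `E = V ⊕ V*`, with their degree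
`degS` and invariance predicate `inv`; `V` (of degree `d`) is φ-invariant when
`γ = 0`, and `V*` (of degree `-d`) when `β = 0`; semistability means every
φ-invariant subbundle has nonpositive degree.  Conclusion: if `d > n(g-1)` then
`γ = 0`, so `V ⊂ V ⊕ V*` is a φ-invariant subbundle of positive degree and `(E,φ)`
is unstable; and consequently semistability forces `|τ| = |d| ≤ n(g-1)`. -/
theorem toledo_invariant_bound
    (n g : ℕ) (hg : 2 ≤ g) (d : ℤ)
    (SecB SecG : Type*) [AddCommGroup SecB] [AddCommGroup SecG]
    (β : SecB) (γ : SecG)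
    (hdegG : γ ≠ 0 → 0 ≤ -((n : ℤ) + 1) * d + (n : ℤ) * ((n : ℤ) + 1) * ((g : ℤ) - 1))
    (hdegB : β ≠ 0 → 0 ≤ ((n : ℤ) + 1) * d + (n : ℤ) * ((n : ℤ) + 1) * ((g : ℤ) - 1))
    (Sub : Type*) (degS : Sub → ℤ) (inv : Sub → Prop)
    (VE VdualE : Sub)
    (hVdeg : degS VE = d) (hVdualdeg : degS VdualE = -d)
    (hVinv : γ = 0 → inv VE)
    (hVdualinv : β = 0 → inv VdualE)
    (semistable : Prop)
    (hsemi : semistable ↔ ∀ F : Sub, inv F → degS F ≤ 0) :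
    ((n : ℤ) * ((g : ℤ) - 1) < d → γ = 0 ∧ inv VE ∧ 0 < degS VE ∧ ¬semistable) ∧
    (semistable → |d| ≤ (n : ℤ) * ((g : ℤ) - 1)) := by
  have hbound : 0 ≤ (n : ℤ) * ((g : ℤ) - 1) := mul_nonneg (by positivity) (by omega)
  have hγ (hd : (n : ℤ) * ((g : ℤ) - 1) < d) : γ = 0 :=
    eq_zero_of_symSqTwistDegree_nonneg (e := -d)
      (by simpa only [symSqTwistDegree, mul_neg, neg_mul] using hdegG) (by rwa [neg_neg])
  have hβ (hd : (n : ℤ) * ((g : ℤ) - 1) < -d) : β = 0 :=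
    eq_zero_of_symSqTwistDegree_nonneg hdegB hd
  have hVpos (hd : (n : ℤ) * ((g : ℤ) - 1) < d) : 0 < degS VE := by omega
  refine ⟨fun hd => ⟨hγ hd, hVinv (hγ hd), hVpos hd, fun hs => ?_⟩, fun hs => abs_le.2 ⟨?_, ?_⟩⟩
  · exact (hsemi.1 hs VE (hVinv (hγ hd))).not_gt (hVpos hd)
  · by_contra! hd
    have := hsemi.1 hs VdualE (hVdualinv (hβ (by omega)))
    omega
  · by_contra! hd
    have := hsemi.1 hs VE (hVinv (hγ hd))
    omega
end

section
/- Let (E, ∂̄_E, φ) be a Higgs bundle with metric h solving the Hitchin equations, and let g be a holomorphic gauge transformation (∂̄_E g = 0) such that g⁻¹φg = ζφ for some ζ ∈ U(1). Then g is unitary with respect to h, i.e. h·g*ʰ·g = h, where g*ʰ is the h-adjoint of g. In particular, if g is diagonalizable, h splits as an orthogonal direct sum along the eigenbundles of g. -/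
/-!
Gauge-transforming the harmonic metric `h` by `g` gives a solution for `(g⁻¹∂̄g, g⁻¹φg)`,
which is `(∂̄, ζφ)` because `g` is holomorphic and rescales `φ`; the `U(1)`-invariance makes
it a solution for `(∂̄, φ)`, so uniqueness forces `h(g·, g·) = h`. An eigenvalue `μ` of an
`h`-isometry then has `|μ| = 1` by positivity, and `h(x, y) = μ̄ ν h(x, y)` for eigenvectors
`x, y` forces `h(x, y) = 0` unless `μ̄ ν = 1 = μ̄ μ`, i.e. `μ = ν`.
-/

open ComplexConjugate

section IsometryEigenvectors

variable {V : Type*} [AddCommGroup V] [Module ℂ V] {h : V → V → ℂ}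

theorem conj_mul_self_eq_one_of_isometry_eigenvector
    (hsmul₁ : ∀ (c : ℂ) (x y : V), h (c • x) y = conj c * h x y)
    (hsmul₂ : ∀ (c : ℂ) (x y : V), h x (c • y) = c * h x y)
    (hpos : ∀ x, x ≠ 0 → 0 < (h x x).re)
    {g : V → V} (hg : ∀ x y, h (g x) (g y) = h x y)
    {μ : ℂ} {x : V} (hx : g x = μ • x) (hx0 : x ≠ 0) :
    conj μ * μ = 1 := by
  have hxx : h x x ≠ 0 := fun hzero => by simpa [hzero] using hpos x hx0
  have hgxx := hg x x
  rw [hx, hsmul₁, hsmul₂, ← mul_assoc] at hgxx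
  exact (mul_eq_right₀ hxx).1 hgxx

theorem isometry_eigenvectors_orthogonal
    (hsmul₁ : ∀ (c : ℂ) (x y : V), h (c • x) y = conj c * h x y)
    (hsmul₂ : ∀ (c : ℂ) (x y : V), h x (c • y) = c * h x y)
    (hpos : ∀ x, x ≠ 0 → 0 < (h x x).re)
    {g : V → V} (hg : ∀ x y, h (g x) (g y) = h x y)
    {μ ν : ℂ} (hμν : μ ≠ ν) {x y : V} (hx : g x = μ • x) (hy : g y = ν • y) :
    h x y = 0 := by
  by_contra hxy
  have hx0 : x ≠ 0 := by
    rintro rfl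
    exact hxy (by simpa using hsmul₁ 0 0 y)
  have hμμ : conj μ * μ = 1 :=
    conj_mul_self_eq_one_of_isometry_eigenvector hsmul₁ hsmul₂ hpos hg hx hx0
  have hμν' : conj μ * ν = 1 := by
    have hgxy := hg x y
    rw [hx, hy, hsmul₁, hsmul₂, ← mul_assoc] at hgxy
    exact (mul_eq_right₀ hxy).1 hgxy
  have hμ0 : conj μ ≠ 0 := left_ne_zero_of_mul_eq_one hμμ
  exact hμν (mul_left_cancel₀ hμ0 (hμμ.trans hμν'.symm))

end IsometryEigenvectors

theorem holomorphic_gauge_unitary_general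
    (V : Type*) [AddCommGroup V] [Module ℂ V]
    (Dbar : Type*) (D : Dbar)
    (φ : V →ₗ[ℂ] V) (g : V ≃ₗ[ℂ] V) (ζ : ℂ) (hζ : ‖ζ‖ = 1)
    (h : V → V → ℂ)
    (hsmul₁ : ∀ (c : ℂ) (x y : V), h (c • x) y = (starRingEnd ℂ c) * h x y)
    (hsmul₂ : ∀ (c : ℂ) (x y : V), h x (c • y) = c * h x y)
    (hpos : ∀ x, x ≠ 0 → 0 < (h x x).re)
    (solves : Dbar → (V →ₗ[ℂ] V) → (V → V → ℂ) → Prop)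
    (hsol : solves D φ h)
    (huniq : ∀ h₁ h₂, solves D φ h₁ → solves D φ h₂ → h₁ = h₂)
    (actD : (V ≃ₗ[ℂ] V) → Dbar → Dbar)
    (hgauge : ∀ h' : V → V → ℂ, solves D φ h' →
        solves (actD g D) ((g.symm.toLinearMap ∘ₗ φ) ∘ₗ g.toLinearMap)
          (fun x y => h' (g x) (g y)))
    (hU1 : ∀ (D' : Dbar) (h' : V → V → ℂ) (ζ' : ℂ), ‖ζ'‖ = 1 →
        (solves D' (ζ' • φ) h' ↔ solves D' φ h'))
    (hhol : actD g D = D)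
    (hconj : (g.symm.toLinearMap ∘ₗ φ) ∘ₗ g.toLinearMap = ζ • φ) :
    (∀ x y, h (g x) (g y) = h x y) ∧
    (∀ μ ν : ℂ, μ ≠ ν → ∀ x y : V, g x = μ • x → g y = ν • y → h x y = 0) := by
  have hgauged : solves D φ (fun x y => h (g x) (g y)) := by
    have := hgauge h hsol
    rwa [hhol, hconj, hU1 D _ ζ hζ] at this
  have hunitary : ∀ x y, h (g x) (g y) = h x y := congrFun₂ (huniq _ _ hgauged hsol)
  exact ⟨hunitary, fun μ ν hμν x y =>
    isometry_eigenvectors_orthogonal hsmul₁ hsmul₂ hpos hunitary hμν⟩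

/-- a holomorphic gauge transformation conjugating the Higgs field into a
unimodular multiple of itself is unitary for the harmonic metric.  `Dbar` is the set
of holomorphic structures, `solves D' φ' h'` is the predicate "`h'` solves the Hitchin
equations for the Higgs bundle `(D', φ')`".  The metric `h` is a positive-definite
Hermitian form; `g` is a gauge transformation with `∂̄ g = 0` (i.e. `g` fixes `D`,
hypothesis `hhol`) and `g⁻¹ φ g = ζ φ` with `ζ ∈ U(1)` (hypothesis `hconj`).  Gauge
transformations act on solutions by `(∂̄, φ, h) ↦ (g⁻¹∂̄g, g⁻¹φg, h(g·, g·))`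
(hypothesis `hgauge`), the `U(1)`-action `φ ↦ ζφ` preserves solutions (`hU1`), and
the solution metric is unique (`huniq`).  Conclusion: `h(gx, gy) = h(x,y)`, i.e.
`h g*ʰ g = h`; in particular eigenvectors of `g` for distinct eigenvalues are
`h`-orthogonal, so if `g` is diagonalizable then `h` splits as an orthogonal direct
sum along the eigenbundles of `g`. -/
theorem holomorphic_gauge_unitary
    (V : Type*) [AddCommGroup V] [Module ℂ V]
    (Dbar : Type*) (D : Dbar)
    (φ : V →ₗ[ℂ] V) (g : V ≃ₗ[ℂ] V) (ζ : ℂ) (hζ : ‖ζ‖ = 1)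
    (h : V → V → ℂ)
    (hadd₁ : ∀ x y z, h (x + y) z = h x z + h y z)
    (hadd₂ : ∀ x y z, h x (y + z) = h x y + h x z)
    (hsmul₁ : ∀ (c : ℂ) (x y : V), h (c • x) y = (starRingEnd ℂ c) * h x y)
    (hsmul₂ : ∀ (c : ℂ) (x y : V), h x (c • y) = c * h x y)
    (hherm : ∀ x y, h x y = starRingEnd ℂ (h y x))
    (hpos : ∀ x, x ≠ 0 → 0 < (h x x).re)
    (solves : Dbar → (V →ₗ[ℂ] V) → (V → V → ℂ) → Prop)
    (hsol : solves D φ h)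
    (huniq : ∀ h₁ h₂, solves D φ h₁ → solves D φ h₂ → h₁ = h₂)
    (actD : (V ≃ₗ[ℂ] V) → Dbar → Dbar)
    (hgauge : ∀ h' : V → V → ℂ, solves D φ h' →
        solves (actD g D) ((g.symm.toLinearMap ∘ₗ φ) ∘ₗ g.toLinearMap)
          (fun x y => h' (g x) (g y)))
    (hU1 : ∀ (D' : Dbar) (h' : V → V → ℂ) (ζ' : ℂ), ‖ζ'‖ = 1 →
        (solves D' (ζ' • φ) h' ↔ solves D' φ h'))
    (hhol : actD g D = D)
    (hconj : (g.symm.toLinearMap ∘ₗ φ) ∘ₗ g.toLinearMap = ζ • φ) :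
    (∀ x y, h (g x) (g y) = h x y) ∧
    (∀ μ ν : ℂ, μ ≠ ν → ∀ x y : V, g x = μ • x → g y = ν • y → h x y = 0) :=
  holomorphic_gauge_unitary_general V Dbar D φ g ζ hζ h hsmul₁ hsmul₂ hpos solves hsol huniq actD
    hgauge hU1 hhol hconj
end

section
/- Let f: Σ → G/T be a cyclic surface, i.e. the pullbacks satisfy f*ω̂_j = 0 for j ≠ ±1 in the ℤ/(m+1)-grading, f*ω̂_{-1} is a (1,0)-form, and f*(Θ(ω̂_{-1})) = -f*ω̂_1. Then the pulled-back Higgs field Φ = f*ω̂_{-1} is holomorphic with respect to (f*∇ᶜ)^{0,1} — i.e. (d^{f*∇ᶜ})^{0,1}Φ = 0 — because the flatness equation d^{∇ᶜ}ω̂_{-1} + Σ_j [ω̂_j, ω̂_{-1-j}] = 0 pulls back to d^{f*∇ᶜ}Φ = 0 and Φ is type (1,0). -/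
/-!
Of the graded pieces only `ω 1` and `ω (-1)` survive, and a pair of them can occur in the
degree `-1` bracket sum only when both degrees agree, since `1 + (-1) = 0 ≠ -1` unless the
grading ring is trivial. So every bracket is a self-bracket of a form of pure type: `ω (-1)` is
of type (1,0), and `ω 1 = -Θ (ω (-1))` is of type (0,1). These vanish on a surface, and the
flatness equation reduces to `d (ω (-1)) = 0`.
-/

theorem neg_one_sub_eq_self_of_eq_one_or_neg_one {R : Type*} [CommRing R] {j : R}
    (hj : j = 1 ∨ j = -1) (hk : -1 - j = 1 ∨ -1 - j = -1) : -1 - j = j := by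
  rcases hj with rfl | rfl <;> rcases hk with hk | hk
  · exact hk
  · have h10 : (1 : R) = 0 := by linear_combination -hk
    simp [h10]
  · have h10 : (1 : R) = 0 := by linear_combination -hk
    simp [h10]
  · exact hk

theorem bracket_neg_one_sub_eq_zero {R 𝕜 M N : Type*} [CommRing R] [CommSemiring 𝕜]
    [AddCommMonoid M] [Module 𝕜 M] [AddCommMonoid N] [Module 𝕜 N]
    (br : M →ₗ[𝕜] M →ₗ[𝕜] N) (ω : R → M)
    (hω : ∀ j : R, j ≠ 1 → j ≠ -1 → ω j = 0)
    (hbr1 : br (ω 1) (ω 1) = 0) (hbr_neg_one : br (ω (-1)) (ω (-1)) = 0) (j : R) :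
    br (ω j) (ω (-1 - j)) = 0 := by
  by_cases hj : j = 1 ∨ j = -1
  · by_cases hk : -1 - j = 1 ∨ -1 - j = -1
    · rw [neg_one_sub_eq_self_of_eq_one_or_neg_one hj hk]
      rcases hj with rfl | rfl
      exacts [hbr1, hbr_neg_one]
    · rw [not_or] at hk
      rw [hω _ hk.1 hk.2, map_zero]
  · rw [not_or] at hj
    rw [hω _ hj.1 hj.2, map_zero, LinearMap.zero_apply]

theorem cyclic_surface_higgs_field_holomorphic_general
    (m : ℕ)
    (O1 O2 : Type*) [AddCommGroup O1] [Module ℂ O1] [AddCommGroup O2] [Module ℂ O2]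
    (O10 O01 : Submodule ℂ O1)
    (d : O1 →ₗ[ℂ] O2)
    (br : O1 →ₗ[ℂ] O1 →ₗ[ℂ] O2)
    (hbr10 : ∀ α ∈ O10, ∀ β ∈ O10, br α β = 0)
    (hbr01 : ∀ α ∈ O01, ∀ β ∈ O01, br α β = 0)
    (Θ : O1 →+ O1)
    (hΘ : ∀ α ∈ O10, Θ α ∈ O01)
    (ω : ZMod (m + 1) → O1)
    (hcyc : ∀ j : ZMod (m + 1), j ≠ 1 → j ≠ -1 → ω j = 0)
    (h10 : ω (-1) ∈ O10)
    (hΘrel : Θ (ω (-1)) = -(ω 1))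
    (hflat : d (ω (-1)) + ∑ j : ZMod (m + 1), br (ω j) (ω (-1 - j)) = 0) :
    d (ω (-1)) = 0 := by
  have h01 : ω 1 ∈ O01 := neg_mem_iff.mp (hΘrel ▸ hΘ _ h10)
  have hsum : ∑ j : ZMod (m + 1), br (ω j) (ω (-1 - j)) = 0 :=
    Finset.sum_eq_zero fun j _ =>
      bracket_neg_one_sub_eq_zero br ω hcyc (hbr01 _ h01 _ h01) (hbr10 _ h10 _ h10) j
  rwa [hsum, add_zero] at hflat

/-- holomorphicity of the Higgs field pulled back by a cyclic surface
`f : Σ → G/T`.  Here `O1` and `O2` are the (complex modules of) `f*[𝔤]`-valued 1- and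
2-forms on the Riemann surface `Σ`, with the submodules `O10` and `O01` of (1,0)- and
(0,1)-forms; on a surface the wedge-bracket `br` of two (1,0)-forms or of two
(0,1)-forms vanishes.  `d` is the covariant exterior differential `d^{f*∇ᶜ}`, `Θ` the
(parallel, fiberwise) Cartan involution extended to forms (it exchanges types (1,0)
and (0,1)), and `ω j = f*ω̂_j` are the pullbacks of the ℤ/(m+1)-graded pieces of the
Maurer–Cartan form (`m ≥ 2` is the height of the highest root, as `rk G ≥ 2`).
The cyclic-surface conditions are `f*ω̂_j = 0` for `j ≠ ±1`, `Φ := f*ω̂_{-1}` of type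
(1,0), and `f*(Θ ω̂_{-1}) = - f*ω̂_1`.  The pulled-back flatness equation in degree
`-1` is `d Φ + Σ_j [ω̂_j ∧ ω̂_{-1-j}] = 0`.  Conclusion: `d^{f*∇ᶜ} Φ = 0`; in
particular `(d^{f*∇ᶜ})^{0,1} Φ = 0`, i.e. `Φ` is holomorphic. -/
theorem cyclic_surface_higgs_field_holomorphic
    (m : ℕ) (hm : 2 ≤ m)
    (O1 O2 : Type*) [AddCommGroup O1] [Module ℂ O1] [AddCommGroup O2] [Module ℂ O2]
    (O10 O01 : Submodule ℂ O1)
    (d : O1 →ₗ[ℂ] O2)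
    (br : O1 →ₗ[ℂ] O1 →ₗ[ℂ] O2)
    (hbr10 : ∀ α ∈ O10, ∀ β ∈ O10, br α β = 0)
    (hbr01 : ∀ α ∈ O01, ∀ β ∈ O01, br α β = 0)
    (Θ : O1 →+ O1)
    (hΘ : ∀ α ∈ O10, Θ α ∈ O01)
    (ω : ZMod (m + 1) → O1)
    (hcyc : ∀ j : ZMod (m + 1), j ≠ 1 → j ≠ -1 → ω j = 0)
    (h10 : ω (-1) ∈ O10)
    (hΘrel : Θ (ω (-1)) = -(ω 1))
    (hflat : d (ω (-1)) + ∑ j : ZMod (m + 1), br (ω j) (ω (-1 - j)) = 0) :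
    d (ω (-1)) = 0 :=
  cyclic_surface_higgs_field_holomorphic_general m O1 O2 O10 O01 d br hbr10 hbr01 Θ hΘ ω hcyc h10
    hΘrel hflat
end
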